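/- Consider the explicit scheme (θ = 0) S(U)ⁿᵢ = Uⁿ⁻¹ᵢ + Δt·inf_α { Σᵢ₌₁^M ((IUⁿ⁻¹)(xᵢ + yᵢ⁺) − 2Uⁿ⁻¹ᵢ + (IUⁿ⁻¹)(xᵢ + yᵢ⁻))/(2k²) + cᵅ Uⁿ⁻¹ᵢ + fᵅ }, where I is a positive interpolation (nonnegative weights, partition of unity) and cᵅ ≤ c̄ for all α. If the CFL condition Δt·(M/k² − cᵅ) ≤ 1 holds for all α, then the scheme is monotone: if U ≤ V pointwise then S(U) ≤ S(V) pointwise. -/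
import Mathlib


/-- Monotonicity of the explicit (θ = 0) semi-Lagrangian scheme under the CFL
condition Δt (M/k² − cᵅ) ≤ 1. -/
theorem stmt_6 (N M : ℕ) (A ι : Type) [Nonempty A]
    (x : ι → Fin N → ℝ) (w : ι → (Fin N → ℝ) → ℝ)
    (yp ym : A → Fin M → Fin N → ℝ)
    (c f : A → ι → ℝ) (cbar Δt k : ℝ)
    (hΔt : 0 < Δt) (hk : 0 < k)
    (hw0 : ∀ j z, 0 ≤ w j z) (hw1 : ∀ z, HasSum (fun j => w j z) 1)
    (hc : ∀ α i, c α i ≤ cbar)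
    (hCFL : ∀ α i, Δt * ((M : ℝ) / k ^ 2 - c α i) ≤ 1)
    (U V : ι → ℝ)
    (hUs : ∀ z, Summable fun j => U j * w j z)
    (hVs : ∀ z, Summable fun j => V j * w j z)
    (hbddU : ∀ i, BddBelow (Set.range fun α =>
        (∑ m, ((∑' j, U j * w j (x i + yp α m)) - 2 * U i
            + (∑' j, U j * w j (x i + ym α m))) / (2 * k ^ 2))
        + c α i * U i + f α i))
    (hbddV : ∀ i, BddBelow (Set.range fun α =>
        (∑ m, ((∑' j, V j * w j (x i + yp α m)) - 2 * V i
            + (∑' j, V j * w j (x i + ym α m))) / (2 * k ^ 2))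
        + c α i * V i + f α i))
    (hUV : ∀ j, U j ≤ V j) :
    ∀ i, U i + Δt * (⨅ α,
        ((∑ m, ((∑' j, U j * w j (x i + yp α m)) - 2 * U i
            + (∑' j, U j * w j (x i + ym α m))) / (2 * k ^ 2))
        + c α i * U i + f α i))
      ≤ V i + Δt * (⨅ α,
        ((∑ m, ((∑' j, V j * w j (x i + yp α m)) - 2 * V i
            + (∑' j, V j * w j (x i + ym α m))) / (2 * k ^ 2))
        + c α i * V i + f α i)) := by
  intro i
  set FU : A → ℝ := fun α =>
      (∑ m, ((∑' j, U j * w j (x i + yp α m)) - 2 * U i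
          + (∑' j, U j * w j (x i + ym α m))) / (2 * k ^ 2))
      + c α i * U i + f α i with hFU
  set FV : A → ℝ := fun α =>
      (∑ m, ((∑' j, V j * w j (x i + yp α m)) - 2 * V i
          + (∑' j, V j * w j (x i + ym α m))) / (2 * k ^ 2))
      + c α i * V i + f α i with hFV
  have hk2 : (0:ℝ) < 2 * k ^ 2 := by positivity
  have key : ∀ α : A, U i + Δt * FU α ≤ V i + Δt * FV α := by
    intro α
    have hIp : ∀ m : Fin M, (∑' j, U j * w j (x i + yp α m))
        ≤ ∑' j, V j * w j (x i + yp α m) := fun m =>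
      Summable.tsum_le_tsum (fun j => mul_le_mul_of_nonneg_right (hUV j) (hw0 j _)) (hUs _) (hVs _)
    have hIm : ∀ m : Fin M, (∑' j, U j * w j (x i + ym α m))
        ≤ ∑' j, V j * w j (x i + ym α m) := fun m =>
      Summable.tsum_le_tsum (fun j => mul_le_mul_of_nonneg_right (hUV j) (hw0 j _)) (hUs _) (hVs _)
    have eU : (∑ m, ((∑' j, U j * w j (x i + yp α m)) - 2 * U i
          + (∑' j, U j * w j (x i + ym α m))) / (2 * k ^ 2))
        = (∑ m, ((∑' j, U j * w j (x i + yp α m)) + (∑' j, U j * w j (x i + ym α m))))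
            / (2 * k ^ 2) - (M : ℝ) * U i / k ^ 2 := by
      rw [← Finset.sum_div]
      have : ∑ m : Fin M, ((∑' j, U j * w j (x i + yp α m)) - 2 * U i
          + (∑' j, U j * w j (x i + ym α m)))
          = (∑ m : Fin M, ((∑' j, U j * w j (x i + yp α m)) + (∑' j, U j * w j (x i + ym α m))))
            - (M : ℝ) * (2 * U i) := by
        simp only [sub_add_eq_add_sub]
        rw [Finset.sum_sub_distrib, Finset.sum_const, Finset.card_univ, Fintype.card_fin,
          nsmul_eq_mul]
      rw [this]
      field_simp
    have eV : (∑ m, ((∑' j, V j * w j (x i + yp α m)) - 2 * V i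
          + (∑' j, V j * w j (x i + ym α m))) / (2 * k ^ 2))
        = (∑ m, ((∑' j, V j * w j (x i + yp α m)) + (∑' j, V j * w j (x i + ym α m))))
            / (2 * k ^ 2) - (M : ℝ) * V i / k ^ 2 := by
      rw [← Finset.sum_div]
      have : ∑ m : Fin M, ((∑' j, V j * w j (x i + yp α m)) - 2 * V i
          + (∑' j, V j * w j (x i + ym α m)))
          = (∑ m : Fin M, ((∑' j, V j * w j (x i + yp α m)) + (∑' j, V j * w j (x i + ym α m))))
            - (M : ℝ) * (2 * V i) := by
        simp only [sub_add_eq_add_sub]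
        rw [Finset.sum_sub_distrib, Finset.sum_const, Finset.card_univ, Fintype.card_fin,
          nsmul_eq_mul]
      rw [this]
      field_simp
    have hcoef : 0 ≤ 1 - Δt * ((M : ℝ) / k ^ 2 - c α i) := by
      linarith [hCFL α i]
    have hS : (∑ m : Fin M, ((∑' j, U j * w j (x i + yp α m)) + (∑' j, U j * w j (x i + ym α m))))
        ≤ ∑ m : Fin M, ((∑' j, V j * w j (x i + yp α m)) + (∑' j, V j * w j (x i + ym α m))) :=
      Finset.sum_le_sum fun m _ => add_le_add (hIp m) (hIm m)
    simp only [hFU, hFV]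
    rw [eU, eV]
    have h1 : (1 - Δt * ((M : ℝ) / k ^ 2 - c α i)) * U i
        ≤ (1 - Δt * ((M : ℝ) / k ^ 2 - c α i)) * V i :=
      mul_le_mul_of_nonneg_left (hUV i) hcoef
    have h2 : Δt * ((∑ m : Fin M, ((∑' j, U j * w j (x i + yp α m)) + (∑' j, U j * w j (x i + ym α m)))) / (2 * k ^ 2))
        ≤ Δt * ((∑ m : Fin M, ((∑' j, V j * w j (x i + yp α m)) + (∑' j, V j * w j (x i + ym α m)))) / (2 * k ^ 2)) :=
      mul_le_mul_of_nonneg_left (div_le_div_of_nonneg_right hS hk2.le) hΔt.le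
    have hkne : (k:ℝ) ^ 2 ≠ 0 := by positivity
    have eL : U i + Δt * ((∑ m : Fin M, ((∑' j, U j * w j (x i + yp α m)) + (∑' j, U j * w j (x i + ym α m)))) / (2 * k ^ 2) - (M : ℝ) * U i / k ^ 2 + c α i * U i + f α i)
        = (1 - Δt * ((M : ℝ) / k ^ 2 - c α i)) * U i
          + Δt * ((∑ m : Fin M, ((∑' j, U j * w j (x i + yp α m)) + (∑' j, U j * w j (x i + ym α m)))) / (2 * k ^ 2))
          + Δt * f α i := by
      field_simp
      ring
    have eR : V i + Δt * ((∑ m : Fin M, ((∑' j, V j * w j (x i + yp α m)) + (∑' j, V j * w j (x i + ym α m)))) / (2 * k ^ 2) - (M : ℝ) * V i / k ^ 2 + c α i * V i + f α i)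
        = (1 - Δt * ((M : ℝ) / k ^ 2 - c α i)) * V i
          + Δt * ((∑ m : Fin M, ((∑' j, V j * w j (x i + yp α m)) + (∑' j, V j * w j (x i + ym α m)))) / (2 * k ^ 2))
          + Δt * f α i := by
      field_simp
      ring
    rw [eL, eR]
    linarith
  have hstep : ∀ α : A, iInf FU ≤ FV α + (V i - U i) / Δt := by
    intro α
    have h1 : iInf FU ≤ FU α := ciInf_le (hbddU i) α
    have h2 : U i + Δt * FU α ≤ V i + Δt * FV α := key α
    have h3 : FU α ≤ FV α + (V i - U i) / Δt := by
      have hd : FU α - FV α ≤ (V i - U i) / Δt := by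
        rw [le_div_iff₀ hΔt]
        nlinarith
      linarith
    exact h1.trans h3
  have hfin : iInf FU - (V i - U i) / Δt ≤ iInf FV :=
    le_ciInf fun α => by linarith [hstep α]
  have hmul := mul_le_mul_of_nonneg_left hfin hΔt.le
  have hq : Δt * ((V i - U i) / Δt) = V i - U i := mul_div_cancel₀ _ hΔt.ne'
  rw [mul_sub, hq] at hmul
  show U i + Δt * iInf FU ≤ V i + Δt * iInf FV
  linarith
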